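/- arXiv:1809.10899 — 3 statements merged into one kernel-verified Lean document; each statement's English description precedes it below -/
import Mathlib

section
/- Under Midzuno sampling (select a first unit k1 from U with probabilities p_k summing to 1, then select n-1 further units by simple random sampling without replacement from the remaining N-1 units), the inclusion probability of unit k is π_k = (n-1)/(N-1) + p_k·(N-n)/(N-1). -/
open Finset

lemma nat_id (M m : ℕ) : M * (Nat.choose M m - Nat.choose (M-1) m) = m * Nat.choose M m := by
  match M, m with
  | 0, m => simp [Nat.choose_eq_zero_iff]; cases m <;> simp [Nat.choose]
  | M+1, 0 => simp
  | M+1, m+1 =>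
    have h : Nat.choose (M+1) (m+1) - Nat.choose M (m+1) = Nat.choose M m := by
      rw [Nat.choose_succ_succ, Nat.succ_eq_add_one]; omega
    simpa [h, Nat.mul_comm] using Nat.add_one_mul_choose_eq M m

lemma filter_not_mem {α : Type*} [DecidableEq α] (t : Finset α) (k : α) (m : ℕ) :
    (Finset.powersetCard m t).filter (fun s => k ∉ s) = Finset.powersetCard m (t.erase k) := by
  ext s
  simp only [mem_filter, mem_powersetCard, subset_erase]
  tauto

/-- Under Midzuno sampling (first unit `k1` drawn with probability `p k1`,
then an `(n-1)`-subset drawn uniformly from `U \ {k1}`), the inclusion probability of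
unit `k` equals `(n-1)/(N-1) + p k * (N-n)/(N-1)`. -/
theorem midzuno_inclusion_probability
    {α : Type*} [Fintype α] [DecidableEq α]
    (N n : ℕ) (hN : N = Fintype.card α) (hN2 : 2 ≤ N) (hn1 : 1 ≤ n) (hnN : n ≤ N)
    (p : α → ℝ) (hp : ∀ k, 0 < p k) (hp1 : ∑ k, p k = 1) (k : α) :
    ∑ k1, p k1 *
        (((Finset.powersetCard (n - 1) (Finset.univ \ {k1})).filter
            (fun s => k ∈ insert k1 s)).card : ℝ) /
          ((Finset.powersetCard (n - 1) (Finset.univ \ {k1})).card : ℝ)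
      = ((n : ℝ) - 1) / ((N : ℝ) - 1) + p k * (((N : ℝ) - n) / ((N : ℝ) - 1)) := by
  set m := n - 1 with hm
  have hN1 : (1:ℝ) ≤ (N:ℝ) - 1 := by
    have : (2:ℝ) ≤ N := by exact_mod_cast hN2
    linarith
  have hNne : ((N:ℝ) - 1) ≠ 0 := by linarith
  have hcard : ∀ k1 : α, (Finset.univ \ ({k1} : Finset α)).card = N - 1 := by
    intro k1
    rw [Finset.sdiff_singleton_eq_erase, Finset.card_erase_of_mem (mem_univ k1),
      Finset.card_univ, ← hN]
  have hC : ∀ k1 : α, (Finset.powersetCard m (Finset.univ \ {k1})).card = (N-1).choose m := by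
    intro k1; rw [Finset.card_powersetCard, hcard]
  have hmM : m ≤ N - 1 := by omega
  have hCpos : 0 < (N-1).choose m := Nat.choose_pos hmM
  have hCne : (((N-1).choose m : ℕ) : ℝ) ≠ 0 := by positivity
  have hmcast : ((m:ℕ) : ℝ) = (n:ℝ) - 1 := by
    rw [hm, Nat.cast_sub hn1]; simp
  have hterm : ∀ k1 ∈ Finset.univ.erase k,
      p k1 * (((Finset.powersetCard m (Finset.univ \ {k1})).filter
            (fun s => k ∈ insert k1 s)).card : ℝ) /
          ((Finset.powersetCard m (Finset.univ \ {k1})).card : ℝ)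
        = p k1 * (((n:ℝ) - 1) / ((N:ℝ) - 1)) := by
    intro k1 hk1
    have hne : k ≠ k1 := by
      intro h; subst h; exact (Finset.notMem_erase k _ ) hk1
    have hfe : (Finset.powersetCard m (Finset.univ \ {k1})).filter (fun s => k ∈ insert k1 s)
        = (Finset.powersetCard m (Finset.univ \ {k1})).filter (fun s => k ∈ s) := by
      apply Finset.filter_congr
      intro s _
      simp [Finset.mem_insert, hne]
    have hsplit : ((Finset.powersetCard m (Finset.univ \ {k1})).filter (fun s => k ∈ s)).card
        + ((Finset.powersetCard m (Finset.univ \ {k1})).filter (fun s => k ∉ s)).card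
        = (N-1).choose m := by
      rw [Finset.card_filter_add_card_filter_not, hC]
    have hkmem : k ∈ Finset.univ \ ({k1} : Finset α) := by
      simp [hne]
    have hnotmem : ((Finset.powersetCard m (Finset.univ \ {k1})).filter (fun s => k ∉ s)).card
        = (N-2).choose m := by
      have h21 : N - 1 - 1 = N - 2 := by omega
      rw [filter_not_mem, Finset.card_powersetCard, Finset.card_erase_of_mem hkmem, hcard, h21]
    have hmemcard : ((Finset.powersetCard m (Finset.univ \ {k1})).filter (fun s => k ∈ s)).card
        = (N-1).choose m - (N-2).choose m := by omega
    have hid := nat_id (N-1) m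
    have hNN : N - 1 - 1 = N - 2 := by omega
    rw [hNN] at hid
    have hle : (N-2).choose m ≤ (N-1).choose m := Nat.choose_le_choose m (by omega)
    have hidR : ((N:ℝ) - 1) * (((N-1).choose m : ℝ) - ((N-2).choose m : ℝ))
        = ((n:ℝ) - 1) * ((N-1).choose m : ℝ) := by
      have := congrArg (Nat.cast : ℕ → ℝ) hid
      push_cast [Nat.cast_sub hle, Nat.cast_sub (by omega : 1 ≤ N)] at this
      rw [← hmcast]
      linarith
    rw [hfe, hmemcard, hC, Nat.cast_sub hle, mul_div_assoc]
    congr 1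
    rw [div_eq_div_iff hCne hNne]
    linarith [hidR]
  rw [← Finset.sum_erase_add _ _ (mem_univ k), Finset.sum_congr rfl hterm]
  have hkeq : p k * (((Finset.powersetCard m (Finset.univ \ {k})).filter
            (fun s => k ∈ insert k s)).card : ℝ) /
          ((Finset.powersetCard m (Finset.univ \ {k})).card : ℝ) = p k := by
    have : (Finset.powersetCard m (Finset.univ \ {k})).filter (fun s => k ∈ insert k s)
        = Finset.powersetCard m (Finset.univ \ {k}) := by
      apply Finset.filter_true_of_mem
      intro s _
      simp
    rw [this, hC, mul_div_assoc, div_self hCne, mul_one]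
  rw [hkeq, ← Finset.sum_mul, Finset.sum_erase_eq_sub (mem_univ k), hp1]
  field_simp
  ring
end

section
/- In the coupling procedure (Algorithm 1), the sample S_SI = S'_MI ∪ {k2} is distributed as a simple random sample of size n from U: for every n-subset A of U, P(S_SI = A) = 1/C(N,n). -/
open Finset

/-- In the coupling procedure (Algorithm 1), the sample
`S_SI = S'_MI ∪ {k2}` is a simple random sample of size `n`: for every `n`-subset `A`
of `U`, the probability that `S_SI = A` equals `1 / C(N, n)`.  The probability is
written out as a sum over the first unit `k1` (drawn with probability `p k1`), the
`(n-1)`-subset `s` of `U \ {k1}` (uniform, probability `1/C(N-1, n-1)`), and the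
unit `k2 ∈ U \ s` (probability `n/N` if `k2 = k1`, and `1/N` otherwise). -/
theorem coupling_SI_sample_is_srs
    {α : Type*} [Fintype α] [DecidableEq α]
    (N n : ℕ) (hN : N = Fintype.card α) (hn1 : 1 ≤ n) (hnN : n ≤ N)
    (p : α → ℝ) (hp : ∀ k, 0 < p k) (hp1 : ∑ k, p k = 1)
    (A : Finset α) (hA : A ∈ Finset.powersetCard n (Finset.univ : Finset α)) :
    ∑ k1, p k1 *
        ∑ s ∈ Finset.powersetCard (n - 1) (Finset.univ \ {k1}),
          (1 / ((N - 1).choose (n - 1) : ℝ)) *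
            ∑ k2 ∈ Finset.univ \ s,
              (if k2 = k1 then (n : ℝ) / N else 1 / (N : ℝ)) *
                (if insert k2 s = A then (1 : ℝ) else 0)
      = 1 / (N.choose n : ℝ) := by
  classical
  obtain ⟨-, hAcard⟩ := Finset.mem_powersetCard.mp hA
  have hC1 : 0 < (N-1).choose (n-1) := Nat.choose_pos (by omega)
  have hC2 : 0 < N.choose n := Nat.choose_pos hnN
  have hNpos : 0 < N := by omega
  set w : α → α → ℝ := fun k1 k2 => if k2 = k1 then (n:ℝ)/N else 1/N with hw
  have key : ∀ k1 : α,
      (∑ s ∈ Finset.powersetCard (n - 1) ((Finset.univ : Finset α) \ {k1}),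
        ∑ k2 ∈ Finset.univ \ s, w k1 k2 * (if insert k2 s = A then (1:ℝ) else 0))
      = (n:ℝ)/N := by
    intro k1
    have hstep : ∀ s ∈ Finset.powersetCard (n - 1) ((Finset.univ : Finset α) \ {k1}),
        (∑ k2 ∈ Finset.univ \ s, w k1 k2 * (if insert k2 s = A then (1:ℝ) else 0))
        = ∑ k2 : α, (if k2 ∈ A ∧ s = A.erase k2 then w k1 k2 else 0) := by
      intro s hs
      have h1 : ∀ k2 ∈ (Finset.univ : Finset α) \ s,
          w k1 k2 * (if insert k2 s = A then (1:ℝ) else 0)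
          = (if k2 ∈ A ∧ s = A.erase k2 then w k1 k2 else 0) := by
        intro k2 hk2
        have hk2s : k2 ∉ s := (Finset.mem_sdiff.mp hk2).2
        have hiff : insert k2 s = A ↔ (k2 ∈ A ∧ s = A.erase k2) := by
          constructor
          · rintro rfl
            exact ⟨Finset.mem_insert_self _ _, by rw [Finset.erase_insert hk2s]⟩
          · rintro ⟨hmem, rfl⟩
            exact Finset.insert_erase hmem
        by_cases h : insert k2 s = A
        · rw [if_pos h, if_pos (hiff.mp h), mul_one]
        · rw [if_neg h, if_neg (fun hc => h (hiff.mpr hc)), mul_zero]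
      rw [Finset.sum_congr rfl h1, Finset.sum_sdiff_eq_sub (Finset.subset_univ s)]
      have hz : (∑ k2 ∈ s, (if k2 ∈ A ∧ s = A.erase k2 then w k1 k2 else 0)) = 0 := by
        apply Finset.sum_eq_zero
        intro k2 hk2
        rw [if_neg]
        rintro ⟨hmem, rfl⟩
        exact (Finset.notMem_erase k2 A) hk2
      rw [hz, sub_zero]
    rw [Finset.sum_congr rfl hstep, Finset.sum_comm]
    have hinner : ∀ k2 : α,
        (∑ s ∈ Finset.powersetCard (n-1) ((Finset.univ : Finset α) \ {k1}),
          (if k2 ∈ A ∧ s = A.erase k2 then w k1 k2 else 0))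
        = if k2 ∈ A ∧ (k1 ∉ A ∨ k1 = k2) then w k1 k2 else 0 := by
      intro k2
      by_cases hk2A : k2 ∈ A
      · simp only [hk2A, true_and]
        have hcard : (A.erase k2).card = n - 1 := by
          rw [Finset.card_erase_of_mem hk2A, hAcard]
        have hmemiff : A.erase k2 ∈ Finset.powersetCard (n-1) ((Finset.univ : Finset α) \ {k1})
            ↔ (k1 ∉ A ∨ k1 = k2) := by
          rw [Finset.mem_powersetCard]
          constructor
          · rintro ⟨hsub, -⟩
            by_cases hk1 : k1 = k2
            · exact Or.inr hk1
            · left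
              intro hk1A
              have : k1 ∈ A.erase k2 := Finset.mem_erase.mpr ⟨hk1, hk1A⟩
              have := hsub this
              simp at this
          · intro h
            refine ⟨?_, hcard⟩
            intro x hx
            rw [Finset.mem_sdiff, Finset.mem_singleton]
            refine ⟨Finset.mem_univ x, ?_⟩
            rintro rfl
            rcases Finset.mem_erase.mp hx with ⟨hne, hmem⟩
            rcases h with h | h
            · exact h hmem
            · exact hne h
        rw [Finset.sum_ite_eq' (Finset.powersetCard (n-1) ((Finset.univ : Finset α) \ {k1}))
          (A.erase k2) (fun _ => w k1 k2)]
        by_cases hc : k1 ∉ A ∨ k1 = k2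
        · rw [if_pos (hmemiff.mpr hc), if_pos hc]
        · rw [if_neg (fun hm => hc (hmemiff.mp hm)), if_neg hc]
      · simp [hk2A]
    rw [Finset.sum_congr rfl (fun k2 _ => hinner k2)]
    by_cases hk1A : k1 ∈ A
    · have : ∀ k2 : α, (if k2 ∈ A ∧ (k1 ∉ A ∨ k1 = k2) then w k1 k2 else 0)
          = if k2 = k1 then w k1 k1 else 0 := by
        intro k2
        by_cases h : k2 = k1
        · subst h
          rw [if_pos ⟨hk1A, Or.inr rfl⟩, if_pos rfl]
        · rw [if_neg, if_neg h]
          rintro ⟨-, h2⟩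
          rcases h2 with h2 | h2
          · exact h2 hk1A
          · exact h h2.symm
      rw [Finset.sum_congr rfl (fun k2 _ => this k2)]
      rw [Finset.sum_ite_eq' Finset.univ k1 (fun _ => w k1 k1)]
      simp [hw]
    · have : ∀ k2 : α, (if k2 ∈ A ∧ (k1 ∉ A ∨ k1 = k2) then w k1 k2 else 0)
          = if k2 ∈ A then 1/(N:ℝ) else 0 := by
        intro k2
        by_cases h : k2 ∈ A
        · rw [if_pos ⟨h, Or.inl hk1A⟩, if_pos h, hw]
          have : k2 ≠ k1 := by rintro rfl; exact hk1A h
          simp [this]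
        · rw [if_neg (fun hc => h hc.1), if_neg h]
      rw [Finset.sum_congr rfl (fun k2 _ => this k2)]
      rw [Finset.sum_ite_mem, Finset.univ_inter, Finset.sum_const, hAcard]
      simp [div_eq_mul_inv, mul_comm]
  have hfact : (N : ℝ) * ((N-1).choose (n-1) : ℝ) = (N.choose n : ℝ) * n := by
    have hnat : N * (N-1).choose (n-1) = N.choose n * n := by
      have h := Nat.add_one_mul_choose_eq (N-1) (n-1)
      have h1 : N - 1 + 1 = N := by omega
      have h2 : n - 1 + 1 = n := by omega
      rw [h1, h2] at h
      exact h
    exact_mod_cast hnat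
  calc ∑ k1, p k1 *
        ∑ s ∈ Finset.powersetCard (n - 1) (Finset.univ \ {k1}),
          (1 / ((N - 1).choose (n - 1) : ℝ)) *
            ∑ k2 ∈ Finset.univ \ s,
              (if k2 = k1 then (n : ℝ) / N else 1 / (N : ℝ)) *
                (if insert k2 s = A then (1 : ℝ) else 0)
      = ∑ k1, p k1 * ((1 / ((N - 1).choose (n - 1) : ℝ)) * ((n:ℝ)/N)) := by
        apply Finset.sum_congr rfl
        intro k1 _
        rw [← Finset.mul_sum, key k1]
    _ = (1 / ((N - 1).choose (n - 1) : ℝ)) * ((n:ℝ)/N) := by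
        rw [← Finset.sum_mul, hp1, one_mul]
    _ = 1 / (N.choose n : ℝ) := by
        have h1 : ((N-1).choose (n-1) : ℝ) ≠ 0 := by exact_mod_cast hC1.ne'
        have h2 : ((N.choose n) : ℝ) ≠ 0 := by exact_mod_cast hC2.ne'
        have h3 : (N : ℝ) ≠ 0 := by exact_mod_cast hNpos.ne'
        have h4 : (n : ℝ) ≠ 0 := by exact_mod_cast (by omega : n ≠ 0)
        field_simp
        linarith [hfact]
end

section
/- If the draw probabilities are proportional to x (p_k = x_k/X), then the ratio estimator under Midzuno sampling is exactly unbiased: E[Ŷ_MI/X̂_MI] = Y/X, where Ŷ_MI = ∑_{k∈S_MI} y_k/π_k, X̂_MI = ∑_{k∈S_MI} x_k/π_k, and π_k are the Midzuno inclusion probabilities. Equivalently, E[(∑_{k∈S} y_k)/(∑_{k∈S} x_k)] = Y/X when S is the Midzuno sample, since under Midzuno with p_k = x_k/X the probability of sample A is P(S = A) = (∑_{k∈A} x_k)/(X·C(N−1,n−1)). -/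
open Finset

lemma midzuno_count_aux {α : Type*} [Fintype α] [DecidableEq α]
    (n : ℕ) (hn : 1 ≤ n) (k : α) :
    ((Finset.powersetCard n (Finset.univ : Finset α)).filter (fun A => k ∈ A)).card
      = (Fintype.card α - 1).choose (n - 1) := by
  have h1 : (Finset.univ \ ({k} : Finset α)).card = Fintype.card α - 1 := by
    rw [Finset.card_sdiff_of_subset (by simp), Finset.card_singleton, Finset.card_univ]
  rw [← h1, ← Finset.card_powersetCard]
  · refine Finset.card_bij' (fun A _ => A.erase k) (fun s _ => insert k s) ?_ ?_ ?_ ?_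
    · intro A hA
      simp only [mem_filter, mem_powersetCard] at hA
      obtain ⟨⟨_, hcard⟩, hk⟩ := hA
      rw [mem_powersetCard]
      constructor
      · intro a ha
        simp only [mem_sdiff, mem_singleton, mem_univ, true_and]
        exact (Finset.mem_erase.1 ha).1
      · rw [Finset.card_erase_of_mem hk, hcard]
    · intro s hs
      rw [mem_powersetCard] at hs
      obtain ⟨hsub, hcard⟩ := hs
      have hks : k ∉ s := fun h => by simpa using hsub h
      simp only [mem_filter, mem_powersetCard]
      refine ⟨⟨Finset.subset_univ _, ?_⟩, Finset.mem_insert_self _ _⟩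
      rw [Finset.card_insert_of_notMem hks, hcard]
      omega
    · intro A hA
      simp only [mem_filter] at hA
      exact Finset.insert_erase hA.2
    · intro s hs
      rw [mem_powersetCard] at hs
      have hks : k ∉ s := fun h => by simpa using hs.1 h
      exact Finset.erase_insert hks

theorem midzuno_ratio_estimator_unbiased
    {α : Type*} [Fintype α] [DecidableEq α]
    (N n : ℕ) (hN : N = Fintype.card α) (hN2 : 2 ≤ N) (hn1 : 1 ≤ n) (hnN : n ≤ N)
    (x y : α → ℝ) (hx : ∀ k, 0 < x k) (X Y : ℝ)
    (hX : X = ∑ k, x k) (hY : Y = ∑ k, y k) :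
    (∀ A ∈ Finset.powersetCard n (Finset.univ : Finset α),
        ∑ k1, (x k1 / X) *
            ∑ s ∈ Finset.powersetCard (n - 1) (Finset.univ \ {k1}),
              (1 / ((N - 1).choose (n - 1) : ℝ)) *
                (if insert k1 s = A then (1 : ℝ) else 0)
          = (∑ k ∈ A, x k) / (X * ((N - 1).choose (n - 1) : ℝ))) ∧
      ∑ A ∈ Finset.powersetCard n (Finset.univ : Finset α),
          ((∑ k ∈ A, x k) / (X * ((N - 1).choose (n - 1) : ℝ))) *
            ((∑ k ∈ A, y k) / (∑ k ∈ A, x k))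
        = Y / X := by
  have hXpos : 0 < X := by
    rw [hX]
    apply Finset.sum_pos (fun k _ => hx k)
    have : 0 < Fintype.card α := by omega
    exact Finset.univ_nonempty_iff.2 (Fintype.card_pos_iff.mp this)
  have hC : (0 : ℝ) < ((N - 1).choose (n - 1) : ℝ) := by
    exact_mod_cast Nat.choose_pos (by omega)
  set C : ℝ := ((N - 1).choose (n - 1) : ℝ) with hCdef
  constructor
  · intro A hA
    rw [Finset.mem_powersetCard] at hA
    obtain ⟨-, hAcard⟩ := hA
    have key : ∀ k1 : α,
        (∑ s ∈ Finset.powersetCard (n - 1) (Finset.univ \ {k1}),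
          (1 / C) * (if insert k1 s = A then (1 : ℝ) else 0))
        = if k1 ∈ A then 1 / C else 0 := by
      intro k1
      rw [← Finset.mul_sum, Finset.sum_boole]
      by_cases hk1 : k1 ∈ A
      · have : (Finset.powersetCard (n - 1) (Finset.univ \ {k1})).filter
            (fun s => insert k1 s = A) = {A.erase k1} := by
          ext s
          simp only [Finset.mem_filter, Finset.mem_powersetCard, Finset.mem_singleton]
          constructor
          · rintro ⟨⟨hsub, -⟩, hins⟩
            have hks : k1 ∉ s := fun h => by simpa using hsub h
            rw [← hins, Finset.erase_insert hks]
          · rintro rfl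
            refine ⟨⟨?_, ?_⟩, Finset.insert_erase hk1⟩
            · intro a ha
              simp only [Finset.mem_sdiff, Finset.mem_singleton, Finset.mem_univ, true_and]
              exact (Finset.mem_erase.1 ha).1
            · rw [Finset.card_erase_of_mem hk1, hAcard]
        rw [this, if_pos hk1]
        simp
      · have : (Finset.powersetCard (n - 1) (Finset.univ \ {k1})).filter
            (fun s => insert k1 s = A) = ∅ := by
          ext s
          simp only [Finset.mem_filter, Finset.notMem_empty, iff_false, not_and]
          rintro - rfl
          exact hk1 (Finset.mem_insert_self _ _)
        rw [this, if_neg hk1]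
        simp
    have key2 : ∀ k1 : α, (x k1 / X) *
        (∑ s ∈ Finset.powersetCard (n - 1) (Finset.univ \ {k1}),
          (1 / C) * (if insert k1 s = A then (1 : ℝ) else 0))
        = if k1 ∈ A then x k1 / (X * C) else 0 := by
      intro k1
      rw [key k1]
      split_ifs
      · rw [div_mul_div_comm, mul_one]
      · rw [mul_zero]
    rw [Finset.sum_congr rfl (fun k1 _ => key2 k1), Finset.sum_ite_mem, Finset.univ_inter,
      ← Finset.sum_div]
  · have hterm : ∀ A ∈ Finset.powersetCard n (Finset.univ : Finset α),
        ((∑ k ∈ A, x k) / (X * C)) * ((∑ k ∈ A, y k) / (∑ k ∈ A, x k))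
          = (∑ k ∈ A, y k) / (X * C) := by
      intro A hA
      rw [Finset.mem_powersetCard] at hA
      have hAne : A.Nonempty := Finset.card_pos.mp (by omega)
      have hSx : (0 : ℝ) < ∑ k ∈ A, x k := Finset.sum_pos (fun k _ => hx k) hAne
      field_simp
    rw [Finset.sum_congr rfl hterm, ← Finset.sum_div]
    have hswap : ∑ A ∈ Finset.powersetCard n (Finset.univ : Finset α), ∑ k ∈ A, y k
        = C * Y := by
      have : ∀ A ∈ Finset.powersetCard n (Finset.univ : Finset α),
          ∑ k ∈ A, y k = ∑ k : α, if k ∈ A then y k else 0 := by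
        intro A hA
        rw [Finset.sum_ite_mem, Finset.univ_inter]
      rw [Finset.sum_congr rfl this, Finset.sum_comm]
      have : ∀ k : α, ∑ A ∈ Finset.powersetCard n (Finset.univ : Finset α),
          (if k ∈ A then y k else 0) = C * y k := by
        intro k
        rw [← Finset.sum_filter, Finset.sum_const, nsmul_eq_mul]
        congr 1
        rw [hCdef, hN, ← midzuno_count_aux n hn1 k]
      rw [Finset.sum_congr rfl (fun k _ => this k), ← Finset.mul_sum, ← hY]
    rw [hswap, mul_comm X C, mul_div_mul_left Y X (ne_of_gt hC)]
end
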